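/- arXiv:2108.02604 — 2 statements merged into one kernel-verified Lean document; each statement's English description precedes it below -/
import Mathlib

section
/- The cone \(\mathcal{H}^+\) of positive self-adjoint Hilbert-Schmidt operators is regular: every sequence \((A_n)_{n \in \mathbb{N}}\) in \(\mathcal{H}\) that is nondecreasing in the order induced by \(\mathcal{H}^+\) (i.e. \(A_{n+1} - A_n \in \mathcal{H}^+\) for all \(n\)) and bounded above by some \(A \in \mathcal{H}\) (i.e. \(A - A_n \in \mathcal{H}^+\) for all \(n\)) converges in the Hilbert-Schmidt norm. -/
/-!
Write `⟨X, Y⟩ = ∑ᵢⱼ ⟪X bᵢ, bⱼ⟫ ⟪Y bᵢ, bⱼ⟫` for the Hilbert–Schmidt inner product. Its finite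
partial sums are sums of the entries of the Hadamard product of two compressed matrices, so by
the Schur product theorem `⟨X, Y⟩ ≥ 0` whenever `X, Y ≥ 0`. With `D = Abd - A 0` and `n ≤ m`,
the operator `X = A m - A n` satisfies `0 ≤ X ≤ D`, whence
`‖X‖²_HS = ⟨X, X⟩ ≤ ⟨X, D⟩ = ⟨A m, D⟩ - ⟨A n, D⟩`. The real sequence `⟨A n, D⟩` is nondecreasing
and bounded by `⟨Abd, D⟩`, so `(A n)` is Cauchy for the Hilbert–Schmidt norm. As that norm
dominates the operator norm, `A n` converges to some `L`, and Fatou's lemma for the sums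
`∑ᵢ ‖(A n - A m) bᵢ‖²` as `m → ∞` gives Hilbert–Schmidt convergence.
-/

open scoped RealInnerProductSpace

open Filter Topology

open Matrix in
theorem Matrix.PosSemidef.sum_sum_mul_nonneg {κ : Type*} [Fintype κ] {M N : Matrix κ κ ℝ}
    (hM : M.PosSemidef) (hN : N.PosSemidef) : 0 ≤ ∑ i, ∑ j, M i j * N i j := by
  simpa [dotProduct, mulVec, hadamard, Finset.mul_sum] using
    (hM.hadamard hN).dotProduct_mulVec_nonneg (fun _ => 1)

theorem summable_mul_of_summable_sq {ι : Type*} {f g : ι → ℝ} (hf : Summable fun i => f i ^ 2)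
    (hg : Summable fun i => g i ^ 2) : Summable fun i => f i * g i := by
  refine .of_norm_bounded ((hf.add hg).div_const 2) fun i => ?_
  rw [Real.norm_eq_abs, abs_mul]
  nlinarith [two_mul_le_add_sq |f i| |g i|, sq_abs (f i), sq_abs (g i)]

theorem summable_and_tsum_le_of_tendsto {α ι : Type*} {l : Filter α} [l.NeBot]
    {f : α → ι → ℝ} {g : ι → ℝ} {C : ℝ} (hf : ∀ a i, 0 ≤ f a i)
    (hfg : ∀ i, Tendsto (fun a => f a i) l (𝓝 (g i)))
    (hC : ∀ᶠ a in l, Summable (f a) ∧ ∑' i, f a i ≤ C) :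
    Summable g ∧ ∑' i, g i ≤ C := by
  have hsum : ∀ s : Finset ι, ∑ i ∈ s, g i ≤ C := fun s =>
    le_of_tendsto (tendsto_finsetSum s fun i _ => hfg i)
      (hC.mono fun a ha => (ha.1.sum_le_tsum s fun i _ => hf a i).trans ha.2)
  have hg : Summable g := summable_of_sum_le (fun i => ge_of_tendsto' (hfg i) (hf · i)) hsum
  exact ⟨hg, hg.tsum_le_of_sum_le hsum⟩

section

variable {H : Type*} [NormedAddCommGroup H] [InnerProductSpace ℝ H]

open Matrix in
theorem ContinuousLinearMap.IsPositive.posSemidef_inner_apply {T : H →L[ℝ] H}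
    (hT : T.IsPositive) {κ : Type*} [Fintype κ] (v : κ → H) :
    (Matrix.of fun i j => ⟪T (v i), v j⟫).PosSemidef := by
  refine .of_dotProduct_mulVec_nonneg ?_ fun x => ?_
  · ext i j
    simp only [conjTranspose_apply, of_apply, star_trivial]
    rw [real_inner_comm, hT.inner_left_eq_inner_right]
  · have h : star x ⬝ᵥ (Matrix.of fun i j => ⟪T (v i), v j⟫) *ᵥ x
        = ⟪T (∑ i, x i • v i), ∑ j, x j • v j⟫ := by
      simp only [dotProduct, mulVec, of_apply, Pi.star_apply, star_trivial, Finset.mul_sum,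
        map_sum, map_smul, sum_inner, inner_sum, real_inner_smul_left, real_inner_smul_right]
      rw [Finset.sum_comm]
      exact Finset.sum_congr rfl fun _ _ => Finset.sum_congr rfl fun _ _ => by ring
    exact h ▸ hT.inner_nonneg_left _

namespace HilbertBasis

variable {ι : Type*} (b : HilbertBasis ι ℝ H)

theorem hasSum_inner_sq (u : H) : HasSum (fun i => ⟪u, b i⟫ ^ 2) (‖u‖ ^ 2) := by
  simpa [sq, real_inner_comm, real_inner_self_eq_norm_mul_norm] using b.hasSum_inner_mul_inner u u

variable {b}

theorem hasSum_inner_apply_sq {X : H →L[ℝ] H} (hX : Summable fun i => ‖X (b i)‖ ^ 2) :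
    HasSum (fun p : ι × ι => ⟪X (b p.1), b p.2⟫ ^ 2) (∑' i, ‖X (b i)‖ ^ 2) := by
  have hrow : ∀ i, HasSum (fun j => ⟪X (b i), b j⟫ ^ 2) (‖X (b i)‖ ^ 2) :=
    fun i => b.hasSum_inner_sq _
  have hsum : Summable fun p : ι × ι => ⟪X (b p.1), b p.2⟫ ^ 2 :=
    (summable_prod_of_nonneg fun _ => sq_nonneg _).2
      ⟨fun i => (hrow i).summable, hX.congr fun i => (hrow i).tsum_eq.symm⟩
  simpa [hsum.tsum_prod, fun i => (hrow i).tsum_eq] using hsum.hasSum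

theorem summable_norm_sq_sub {X Y : H →L[ℝ] H} (hX : Summable fun i => ‖X (b i)‖ ^ 2)
    (hY : Summable fun i => ‖Y (b i)‖ ^ 2) : Summable fun i => ‖(X - Y) (b i)‖ ^ 2 := by
  refine .of_nonneg_of_le (fun _ => sq_nonneg _) (fun i => ?_) ((hX.add hY).mul_left 2)
  calc ‖(X - Y) (b i)‖ ^ 2 ≤ (‖X (b i)‖ + ‖Y (b i)‖) ^ 2 := by
        gcongr; exact norm_sub_le _ _
    _ ≤ 2 * (‖X (b i)‖ ^ 2 + ‖Y (b i)‖ ^ 2) := add_sq_le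

variable (b) in
noncomputable def hsInner (X Y : H →L[ℝ] H) : ℝ :=
  ∑' p : ι × ι, ⟪X (b p.1), b p.2⟫ * ⟪Y (b p.1), b p.2⟫

section hsInner

variable {X Y Z : H →L[ℝ] H} (hX : Summable fun i => ‖X (b i)‖ ^ 2)
  (hY : Summable fun i => ‖Y (b i)‖ ^ 2)
include hX hY

theorem summable_inner_apply_mul_inner_apply :
    Summable fun p : ι × ι => ⟪X (b p.1), b p.2⟫ * ⟪Y (b p.1), b p.2⟫ :=
  summable_mul_of_summable_sq (hasSum_inner_apply_sq hX).summable
    (hasSum_inner_apply_sq hY).summable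

theorem hsInner_sub_left (hZ : Summable fun i => ‖Z (b i)‖ ^ 2) :
    b.hsInner (X - Y) Z = b.hsInner X Z - b.hsInner Y Z := by
  rw [hsInner, hsInner, hsInner, ← (summable_inner_apply_mul_inner_apply hX hZ).tsum_sub
    (summable_inner_apply_mul_inner_apply hY hZ)]
  simp only [sub_apply, inner_sub_left, sub_mul]

end hsInner

theorem hsInner_comm (X Y : H →L[ℝ] H) : b.hsInner X Y = b.hsInner Y X :=
  tsum_congr fun _ => mul_comm _ _

theorem hsInner_self {X : H →L[ℝ] H} (hX : Summable fun i => ‖X (b i)‖ ^ 2) :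
    b.hsInner X X = ∑' i, ‖X (b i)‖ ^ 2 := by
  rw [hsInner, ← (hasSum_inner_apply_sq hX).tsum_eq]
  simp only [sq]

theorem hsInner_nonneg {X Y : H →L[ℝ] H} (hXpos : X.IsPositive) (hYpos : Y.IsPositive)
    (hX : Summable fun i => ‖X (b i)‖ ^ 2) (hY : Summable fun i => ‖Y (b i)‖ ^ 2) :
    0 ≤ b.hsInner X Y := by
  classical
  have hsquares : Tendsto (fun s : Finset ι => s ×ˢ s) atTop atTop :=
    tendsto_atTop_finset_of_monotone (fun _ _ h => Finset.product_subset_product h h)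
      fun p => ⟨{p.1, p.2}, by simp⟩
  refine ge_of_tendsto' ((summable_inner_apply_mul_inner_apply hX hY).hasSum.comp hsquares)
    fun s => ?_
  simpa [Finset.sum_product, ← Finset.sum_coe_sort s] using
    (hXpos.posSemidef_inner_apply fun i : s => b i).sum_sum_mul_nonneg
      (hYpos.posSemidef_inner_apply fun i : s => b i)

theorem tsum_norm_sq_le_hsInner {X D : H →L[ℝ] H} (hXpos : X.IsPositive)
    (hDX : (D - X).IsPositive) (hX : Summable fun i => ‖X (b i)‖ ^ 2)
    (hD : Summable fun i => ‖D (b i)‖ ^ 2) :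
    ∑' i, ‖X (b i)‖ ^ 2 ≤ b.hsInner X D := by
  have h := hsInner_nonneg hDX hXpos (summable_norm_sq_sub hD hX) hX
  rw [hsInner_sub_left hD hX hX, hsInner_comm, hsInner_self hX] at h
  linarith

theorem tendsto_tsum_norm_sq_sub_of_monotone {A : ℕ → H →L[ℝ] H} {B : H →L[ℝ] H}
    (hA : Monotone A) (hAB : ∀ n, A n ≤ B) (hA_HS : ∀ n, Summable fun i => ‖A n (b i)‖ ^ 2)
    (hB_HS : Summable fun i => ‖B (b i)‖ ^ 2) :
    Tendsto (fun p : ℕ × ℕ => ∑' i, ‖(A p.1 - A p.2) (b i)‖ ^ 2) atTop (𝓝 0) := by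
  set D := B - A 0 with hD_def
  have hD : Summable fun i => ‖D (b i)‖ ^ 2 := summable_norm_sq_sub hB_HS (hA_HS 0)
  set t : ℕ → ℝ := fun n => b.hsInner (A n) D
  have ht_sub : ∀ n m, b.hsInner (A m - A n) D = t m - t n := fun n m =>
    hsInner_sub_left (hA_HS m) (hA_HS n) hD
  have ht_mono : Monotone t := fun n m hnm => sub_nonneg.1 <| ht_sub n m ▸
    hsInner_nonneg (hA hnm) (hAB 0) (summable_norm_sq_sub (hA_HS m) (hA_HS n)) hD
  have ht_bdd : BddAbove (Set.range t) := ⟨b.hsInner B D, Set.forall_mem_range.2 fun n =>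
    sub_nonneg.1 <| hsInner_sub_left hB_HS (hA_HS n) hD ▸
      hsInner_nonneg (hAB n) (hAB 0) (summable_norm_sq_sub hB_HS (hA_HS n)) hD⟩
  have hkey : ∀ n m, n ≤ m → ∑' i, ‖(A m - A n) (b i)‖ ^ 2 ≤ dist (t m) (t n) := by
    intro n m hnm
    have hDX : D - (A m - A n) = (B - A m) + (A n - A 0) := by rw [hD_def]; abel
    refine (ht_sub n m ▸ tsum_norm_sq_le_hsInner (hA hnm) (hDX ▸ (hAB m).add (hA n.zero_le))
      (summable_norm_sq_sub (hA_HS m) (hA_HS n)) hD).trans ?_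
    rw [Real.dist_eq]
    exact le_abs_self _
  refine squeeze_zero (fun _ => tsum_nonneg fun _ => sq_nonneg _) (fun ⟨m, n⟩ => ?_)
    (cauchySeq_iff_tendsto_dist_atTop_0.1 (tendsto_atTop_ciSup ht_mono ht_bdd).cauchySeq)
  rcases le_total n m with h | h
  · exact hkey n m h
  · simp_rw [sub_apply, norm_sub_rev (A m _), dist_comm (t m)]
    exact hkey m n h

variable [CompleteSpace H]

theorem opNorm_le_sqrt_tsum {T : H →L[ℝ] H} (hT : IsSelfAdjoint T)
    (hT_HS : Summable fun i => ‖T (b i)‖ ^ 2) : ‖T‖ ≤ √(∑' i, ‖T (b i)‖ ^ 2) := by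
  refine T.opNorm_le_bound (Real.sqrt_nonneg _) fun x => ?_
  have hx : ‖T x‖ ^ 2 ≤ ‖x‖ ^ 2 * ∑' i, ‖T (b i)‖ ^ 2 := by
    rw [← (b.hasSum_inner_sq (T x)).tsum_eq, ← tsum_mul_left]
    refine (b.hasSum_inner_sq _).summable.tsum_le_tsum (fun i => ?_) (hT_HS.mul_left _)
    have hsymm : ⟪T x, b i⟫ = ⟪x, T (b i)⟫ := hT.isSymmetric x (b i)
    rw [hsymm, ← mul_pow, ← sq_abs]
    gcongr
    exact abs_real_inner_le_norm _ _
  have hS : 0 ≤ ∑' i, ‖T (b i)‖ ^ 2 := tsum_nonneg fun _ => sq_nonneg _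
  refine le_of_pow_le_pow_left₀ two_ne_zero (by positivity) ?_
  rwa [mul_pow, Real.sq_sqrt hS, mul_comm]

theorem exists_tendsto_tsum_norm_sq_sub {A : ℕ → H →L[ℝ] H} (hA_sa : ∀ n, IsSelfAdjoint (A n))
    (hA_HS : ∀ n, Summable fun i => ‖A n (b i)‖ ^ 2)
    (hA : Tendsto (fun p : ℕ × ℕ => ∑' i, ‖(A p.1 - A p.2) (b i)‖ ^ 2) atTop (𝓝 0)) :
    ∃ L : H →L[ℝ] H, IsSelfAdjoint L ∧ (Summable fun i => ‖L (b i)‖ ^ 2) ∧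
      Tendsto (fun n => ∑' i, ‖(A n - L) (b i)‖ ^ 2) atTop (𝓝 0) := by
  have hcauchy : CauchySeq A := by
    refine cauchySeq_iff_tendsto_dist_atTop_0.2 <|
      squeeze_zero (fun _ => dist_nonneg) (fun p => ?_) (by simpa using hA.sqrt)
    rw [dist_eq_norm]
    exact opNorm_le_sqrt_tsum ((hA_sa _).sub (hA_sa _)) (summable_norm_sq_sub (hA_HS _) (hA_HS _))
  obtain ⟨L, hL⟩ := cauchySeq_tendsto_of_complete hcauchy
  have hL_sa : IsSelfAdjoint L :=
    (isClosed_eq continuous_star continuous_id).mem_of_tendsto hL (.of_forall hA_sa)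
  have hsmall : ∀ ε > 0, ∀ᶠ n in atTop,
      (Summable fun i => ‖(A n - L) (b i)‖ ^ 2) ∧ ∑' i, ‖(A n - L) (b i)‖ ^ 2 ≤ ε := by
    intro ε hε
    obtain ⟨N, hN⟩ := eventually_atTop_prod_self.1 (hA.eventually (ge_mem_nhds hε))
    filter_upwards [eventually_ge_atTop N] with n hn
    refine summable_and_tsum_le_of_tendsto (l := atTop)
      (fun m i => sq_nonneg ‖(A n - A m) (b i)‖) (fun i => ?_) ?_
    · exact (((ContinuousLinearMap.apply ℝ H (b i)).continuous.tendsto _).comp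
        (hL.const_sub (A n))).norm.pow 2
    · filter_upwards [eventually_ge_atTop N] with m hm
      exact ⟨summable_norm_sq_sub (hA_HS n) (hA_HS m), hN n m hn hm⟩
  obtain ⟨n, hn, -⟩ := (hsmall 1 one_pos).exists
  refine ⟨L, hL_sa, by simpa using summable_norm_sq_sub (hA_HS n) hn, ?_⟩
  refine tendsto_order.2 ⟨fun a ha => .of_forall fun n => ha.trans_le ?_, fun a ha => ?_⟩
  · exact tsum_nonneg fun _ => sq_nonneg _
  · exact (hsmall (a / 2) (by positivity)).mono fun n hn => hn.2.trans_lt (by linarith)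

end HilbertBasis

end

theorem regular_cone_positive_HS_general
    {H : Type*} [NormedAddCommGroup H] [InnerProductSpace ℝ H] [CompleteSpace H]
    {ι : Type*} (b : HilbertBasis ι ℝ H)
    (A : ℕ → H →L[ℝ] H)
    (hA_sa : ∀ n, IsSelfAdjoint (A n))
    (hA_HS : ∀ n, Summable fun i => ‖A n (b i)‖ ^ 2)
    (hmono : ∀ n, ∀ h : H, 0 ≤ ⟪(A (n + 1) - A n) h, h⟫)
    (Abd : H →L[ℝ] H) (hAbd_sa : IsSelfAdjoint Abd)
    (hAbd_HS : Summable fun i => ‖Abd (b i)‖ ^ 2)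
    (hbd : ∀ n, ∀ h : H, 0 ≤ ⟪(Abd - A n) h, h⟫) :
    ∃ L : H →L[ℝ] H, IsSelfAdjoint L ∧ (Summable fun i => ‖L (b i)‖ ^ 2) ∧
      Filter.Tendsto (fun n => ∑' i, ‖(A n - L) (b i)‖ ^ 2) Filter.atTop (nhds 0) := by
  have hA_mono : Monotone A := monotone_nat_of_le_succ fun n =>
    (ContinuousLinearMap.isPositive_iff' _).2 ⟨(hA_sa (n + 1)).sub (hA_sa n), hmono n⟩
  have hA_le : ∀ n, A n ≤ Abd := fun n =>
    (ContinuousLinearMap.isPositive_iff' _).2 ⟨hAbd_sa.sub (hA_sa n), hbd n⟩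
  exact b.exists_tendsto_tsum_norm_sq_sub hA_sa hA_HS
    (b.tendsto_tsum_norm_sq_sub_of_monotone hA_mono hA_le hA_HS hAbd_HS)

/-- The cone `𝓗⁺` of positive self-adjoint Hilbert-Schmidt operators is regular: every
nondecreasing (in the order induced by `𝓗⁺`) sequence in `𝓗` that is bounded above by some
element of `𝓗` converges in the Hilbert-Schmidt norm (to a self-adjoint
Hilbert-Schmidt operator). -/
theorem regular_cone_positive_HS
    {H : Type*} [NormedAddCommGroup H] [InnerProductSpace ℝ H] [CompleteSpace H]
    {ι : Type*} [Countable ι] (b : HilbertBasis ι ℝ H)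
    (A : ℕ → H →L[ℝ] H)
    (hA_sa : ∀ n, IsSelfAdjoint (A n))
    (hA_HS : ∀ n, Summable fun i => ‖A n (b i)‖ ^ 2)
    (hmono : ∀ n, ∀ h : H, 0 ≤ ⟪(A (n + 1) - A n) h, h⟫)
    (Abd : H →L[ℝ] H) (hAbd_sa : IsSelfAdjoint Abd)
    (hAbd_HS : Summable fun i => ‖Abd (b i)‖ ^ 2)
    (hbd : ∀ n, ∀ h : H, 0 ≤ ⟪(Abd - A n) h, h⟫) :
    ∃ L : H →L[ℝ] H, IsSelfAdjoint L ∧ (Summable fun i => ‖L (b i)‖ ^ 2) ∧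
      Filter.Tendsto (fun n => ∑' i, ‖(A n - L) (b i)‖ ^ 2) Filter.atTop (nhds 0) :=
  regular_cone_positive_HS_general b A hA_sa hA_HS hmono Abd hAbd_sa hAbd_HS hbd
end

section
/- If the Laplace transforms of two finite Borel measures on \(\mathbb{R}^n\) supported in \([0,\infty)^n\) agree on \([0,\infty)^n\), then the measures are equal. That is, if \(\mu_1, \mu_2\) are finite Borel measures on \(\mathbb{R}^n\) with support contained in \([0,\infty)^n\) and \(\int e^{-\langle x,y\rangle}\,\mu_1(dx) = \int e^{-\langle x,y\rangle}\,\mu_2(dx)\) for all \(y \in [0,\infty)^n\), then \(\mu_1 = \mu_2\). -/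
/-!
Both measures live on the closed, hence Polish, orthant `[0,∞)ⁿ`, so it suffices to compare
their restrictions to it. There the kernels `x ↦ exp (-⟨x, y⟩)`, `y ∈ [0,∞)ⁿ`, are bounded and
continuous, form a multiplicative monoid, and separate points (take `y` a basis vector). Their
span is thus a point-separating algebra of bounded continuous functions on which the two
measures agree, and by Stone–Weierstrass such an algebra determines a finite measure on a Polish
space.
-/

open MeasureTheory BoundedContinuousFunction

namespace MeasureTheory

variable {E : Type*} [TopologicalSpace E] [PolishSpace E] [MeasurableSpace E] [BorelSpace E]

theorem ext_of_forall_mem_submonoid_integral_eq {P P' : Measure E} [IsFiniteMeasure P]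
    [IsFiniteMeasure P'] (M : Submonoid (E →ᵇ ℝ))
    (hsep : ∀ ⦃x y : E⦄, x ≠ y → ∃ g ∈ M, g x ≠ g y)
    (heq : ∀ g ∈ M, ∫ x, g x ∂P = ∫ x, g x ∂P') : P = P' := by
  have hstar : ∀ g : E →ᵇ ℝ, star g = g := fun g => ext fun x => star_trivial (g x)
  set A : StarSubalgebra ℝ (E →ᵇ ℝ) := StarAlgebra.adjoin ℝ M
  -- star is trivial and `M` is closed under products, so `A` is just the linear span of `M`
  have hA : Subalgebra.toSubmodule A.toSubalgebra = Submodule.span ℝ M := by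
    rw [StarAlgebra.adjoin_toSubalgebra, Algebra.adjoin_eq_span]
    have hM : star (M : Set (E →ᵇ ℝ)) = M := Set.ext fun g => by rw [Set.mem_star, hstar]
    rw [hM, Set.union_self, Submonoid.closure_eq]
  refine ext_of_forall_mem_subalgebra_integral_eq_of_polish (A := A) ?_ fun g hg => ?_
  · intro x y hxy
    obtain ⟨g, hgM, hg⟩ := hsep hxy
    exact ⟨g, ⟨toContinuousMapStarₐ ℝ g, ⟨g, StarAlgebra.subset_adjoin ℝ _ hgM, rfl⟩, rfl⟩, hg⟩
  · replace hg : g ∈ Submodule.span ℝ (M : Set (E →ᵇ ℝ)) := hA ▸ hg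
    induction hg using Submodule.span_induction with
    | mem g hg => exact heq g hg
    | zero => simp
    | add f g _ _ hf hg =>
      simp only [coe_add, Pi.add_apply]
      rw [integral_add (f.integrable P) (g.integrable P),
        integral_add (f.integrable P') (g.integrable P'), hf, hg]
    | smul c g _ hg =>
      simp only [coe_smul, smul_eq_mul, integral_const_mul, hg]

theorem Measure.map_comap_subtype_coe_of_ae_mem {α : Type*} [MeasurableSpace α] {μ : Measure α}
    {s : Set α} (hs : MeasurableSet s) (hμ : ∀ᵐ x ∂μ, x ∈ s) :
    (μ.comap ((↑) : s → α)).map (↑) = μ := by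
  rw [map_comap_subtype_coe hs, Measure.restrict_eq_self_of_ae_mem hμ]

theorem integral_subtype_comap_of_ae_mem {α G : Type*} [MeasurableSpace α]
    [NormedAddCommGroup G] [NormedSpace ℝ G] {μ : Measure α} {s : Set α}
    (hs : MeasurableSet s) (hμ : ∀ᵐ x ∂μ, x ∈ s) (f : α → G) :
    ∫ x : s, f x ∂(μ.comap (↑)) = ∫ x, f x ∂μ := by
  rw [integral_subtype_comap hs, Measure.restrict_eq_self_of_ae_mem hμ]

end MeasureTheory

open scoped NNReal

noncomputable section

variable (ι : Type*)

def nonnegOrthant : Set (EuclideanSpace ℝ ι) := {x | ∀ i, 0 ≤ x i}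

variable {ι}

theorem isClosed_nonnegOrthant : IsClosed (nonnegOrthant ι) := by
  simp only [nonnegOrthant, Set.ofPred_forall]
  exact isClosed_iInter fun i => isClosed_le continuous_const (PiLp.continuous_apply 2 _ i)

variable [Fintype ι]

def orthantLaplaceKernel (y : ι → ℝ≥0) : nonnegOrthant ι →ᵇ ℝ :=
  ofNormedAddCommGroup (fun x => Real.exp (-∑ i, (x : EuclideanSpace ℝ ι) i * y i))
    (by fun_prop) 1 fun x => by
      rw [Real.norm_eq_abs, abs_of_pos (Real.exp_pos _), Real.exp_le_one_iff, neg_nonpos]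
      exact Finset.sum_nonneg fun i _ => mul_nonneg (x.2 i) (y i).2

@[simp]
theorem orthantLaplaceKernel_apply (y : ι → ℝ≥0) (x : nonnegOrthant ι) :
    orthantLaplaceKernel y x = Real.exp (-∑ i, (x : EuclideanSpace ℝ ι) i * y i) := rfl

theorem orthantLaplaceKernel_add (y z : ι → ℝ≥0) :
    orthantLaplaceKernel (y + z) = orthantLaplaceKernel y * orthantLaplaceKernel z := by
  ext x
  simp only [orthantLaplaceKernel_apply, coe_mul, Pi.mul_apply, Pi.add_apply, NNReal.coe_add,
    mul_add, Finset.sum_add_distrib, neg_add, Real.exp_add]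

theorem orthantLaplaceKernel_zero : orthantLaplaceKernel (0 : ι → ℝ≥0) = 1 := by
  ext x
  simp

variable (ι) in
def orthantLaplaceKernels : Submonoid (nonnegOrthant ι →ᵇ ℝ) where
  carrier := Set.range orthantLaplaceKernel
  mul_mem' := by
    rintro _ _ ⟨y, rfl⟩ ⟨z, rfl⟩
    exact ⟨y + z, orthantLaplaceKernel_add y z⟩
  one_mem' := ⟨0, orthantLaplaceKernel_zero⟩

theorem orthantLaplaceKernels_separatesPoints ⦃x y : nonnegOrthant ι⦄ (hxy : x ≠ y) :
    ∃ g ∈ orthantLaplaceKernels ι, g x ≠ g y := by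
  classical
  obtain ⟨i, hi⟩ : ∃ i, (x : EuclideanSpace ℝ ι) i ≠ (y : EuclideanSpace ℝ ι) i := by
    by_contra! h
    exact hxy (Subtype.ext (PiLp.ext h))
  refine ⟨orthantLaplaceKernel (Pi.single i 1), ⟨_, rfl⟩, ?_⟩
  simpa [Pi.single_apply, apply_ite ((↑) : ℝ≥0 → ℝ)] using hi

end

/-- If the Laplace transforms of two finite Borel measures on `ℝⁿ`, supported in `[0,∞)ⁿ`,
agree on `[0,∞)ⁿ`, then the measures are equal. -/
theorem laplace_transform_determines_measure_Rn
    {n : ℕ} (μ₁ μ₂ : Measure (EuclideanSpace ℝ (Fin n)))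
    [IsFiniteMeasure μ₁] [IsFiniteMeasure μ₂]
    (hsupp₁ : μ₁ {x | ¬ ∀ i, 0 ≤ x i} = 0) (hsupp₂ : μ₂ {x | ¬ ∀ i, 0 ≤ x i} = 0)
    (hLap : ∀ y : EuclideanSpace ℝ (Fin n), (∀ i, 0 ≤ y i) →
      ∫ x, Real.exp (-(∑ i, x i * y i)) ∂μ₁ = ∫ x, Real.exp (-(∑ i, x i * y i)) ∂μ₂) :
    μ₁ = μ₂ := by
  have hS : MeasurableSet (nonnegOrthant (Fin n)) := isClosed_nonnegOrthant.measurableSet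
  have h₁ : ∀ᵐ x ∂μ₁, x ∈ nonnegOrthant (Fin n) := ae_iff.2 hsupp₁
  have h₂ : ∀ᵐ x ∂μ₂, x ∈ nonnegOrthant (Fin n) := ae_iff.2 hsupp₂
  have : PolishSpace (nonnegOrthant (Fin n)) := isClosed_nonnegOrthant.polishSpace
  have hcomap : μ₁.comap (↑) = μ₂.comap ((↑) : nonnegOrthant (Fin n) → _) := by
    refine ext_of_forall_mem_submonoid_integral_eq _ orthantLaplaceKernels_separatesPoints ?_
    rintro _ ⟨y, rfl⟩
    simp only [orthantLaplaceKernel_apply]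
    rw [integral_subtype_comap_of_ae_mem hS h₁ (fun x => Real.exp (-∑ i, x i * y i)),
      integral_subtype_comap_of_ae_mem hS h₂ (fun x => Real.exp (-∑ i, x i * y i))]
    exact hLap (WithLp.toLp 2 fun i => y i) fun i => (y i).2
  rw [← Measure.map_comap_subtype_coe_of_ae_mem hS h₁,
    ← Measure.map_comap_subtype_coe_of_ae_mem hS h₂, hcomap]
end
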